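/- Let m ≥ 1 be an integer. Suppose given a commutative diagram of abelian groups with exact rows 0 → M → G → J → 0 and 0 → M → N → S → 0, in which the left vertical map M → M is the identity and the middle vertical map G → N is surjective. Assume that every element of G is divisible by m (for every g ∈ G there exists g' ∈ G with m·g' = g) and that N is torsion-free. Then the induced map J → S restricts to a surjection on m-torsion subgroups: for every s ∈ S with m·s = 0 there exists j ∈ J with m·j = 0 mapping to s. (This is the group-theoretic core of Theorem 3.1: surjectivity of the specialization map Trop : Jac_m(X) → Jac_m(Γ) on m-torsion of Jacobians.) -/

import Mathlib

/-!
Lift `s ∈ S[m]` to `n = q g₀ ∈ N`. Then `m • n = i₂ x` for some `x ∈ M`, so `m • g₀ - i₁ x` lies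
in `ker q`. Since `G` is `m`-divisible and `N` has no `m`-torsion, `ker q` is `m`-divisible:
`m • g₀ - i₁ x = m • h` with `q h = 0`. The corrected lift `g₀ - h` satisfies `m • (g₀ - h) = i₁ x`,
so `p₁ (g₀ - h)` is `m`-torsion in `J` and maps to `s`.
-/

theorem AddMonoidHom.exists_nsmul_eq_of_map_eq_zero {G N : Type*} [AddMonoid G] [AddMonoid N]
    (q : G →+ N) {m : ℕ} (hdiv : ∀ g : G, ∃ g' : G, m • g' = g)
    (hN : ∀ y : N, m • y = 0 → y = 0) {g : G} (hg : q g = 0) :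
    ∃ h : G, m • h = g ∧ q h = 0 := by
  obtain ⟨h, rfl⟩ := hdiv g
  exact ⟨h, rfl, hN _ (by rwa [← map_nsmul])⟩

theorem torsion_specialization_surjective_general
    {M G J N S : Type*} [AddCommGroup M] [AddCommGroup G] [AddCommGroup J]
    [AddCommGroup N] [AddCommGroup S]
    (m : ℕ) (hm : 1 ≤ m)
    (i₁ : M →+ G) (p₁ : G →+ J) (i₂ : M →+ N) (p₂ : N →+ S)
    (q : G →+ N) (r : J →+ S)
    -- first row is exact
    (hex₁ : ∀ g : G, p₁ g = 0 ↔ ∃ x : M, i₁ x = g)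
    -- second row is exact
    (hp₂ : Function.Surjective p₂)
    (hex₂ : ∀ n : N, p₂ n = 0 ↔ ∃ x : M, i₂ x = n)
    -- the diagram commutes, the left vertical map being the identity of M
    (hleft : ∀ x : M, q (i₁ x) = i₂ x)
    (hright : ∀ g : G, r (p₁ g) = p₂ (q g))
    -- the middle vertical map is surjective
    (hqsurj : Function.Surjective q)
    -- G is m-divisible
    (hdiv : ∀ g : G, ∃ g' : G, m • g' = g)
    -- N is torsion-free
    (htf : ∀ (n : ℤ) (x : N), n ≠ 0 → n • x = 0 → x = 0) :
    ∀ s : S, m • s = 0 → ∃ j : J, m • j = 0 ∧ r j = s := by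
  intro s hs
  obtain ⟨n, rfl⟩ := hp₂ s
  obtain ⟨g₀, rfl⟩ := hqsurj n
  obtain ⟨x, hx⟩ := (hex₂ (m • q g₀)).mp (by rwa [map_nsmul])
  have hN : ∀ y : N, m • y = 0 → y = 0 := fun y hy =>
    htf m y (by exact_mod_cast Nat.one_le_iff_ne_zero.mp hm) (by rwa [natCast_zsmul])
  obtain ⟨h, hh, hqh⟩ := q.exists_nsmul_eq_of_map_eq_zero hdiv hN (g := m • g₀ - i₁ x)
    (by rw [map_sub, map_nsmul, hleft, hx, sub_self])
  refine ⟨p₁ (g₀ - h), ?_, ?_⟩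
  · rw [← map_nsmul, hex₁]
    exact ⟨x, by rw [smul_sub, hh, sub_sub_cancel]⟩
  · rw [hright, map_sub, hqh, sub_zero]

theorem torsion_specialization_surjective
    {M G J N S : Type*} [AddCommGroup M] [AddCommGroup G] [AddCommGroup J]
    [AddCommGroup N] [AddCommGroup S]
    (m : ℕ) (hm : 1 ≤ m)
    (i₁ : M →+ G) (p₁ : G →+ J) (i₂ : M →+ N) (p₂ : N →+ S)
    (q : G →+ N) (r : J →+ S)
    -- first row is exact
    (hi₁ : Function.Injective i₁) (hp₁ : Function.Surjective p₁)
    (hex₁ : ∀ g : G, p₁ g = 0 ↔ ∃ x : M, i₁ x = g)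
    -- second row is exact
    (hi₂ : Function.Injective i₂) (hp₂ : Function.Surjective p₂)
    (hex₂ : ∀ n : N, p₂ n = 0 ↔ ∃ x : M, i₂ x = n)
    -- the diagram commutes, the left vertical map being the identity of M
    (hleft : ∀ x : M, q (i₁ x) = i₂ x)
    (hright : ∀ g : G, r (p₁ g) = p₂ (q g))
    -- the middle vertical map is surjective
    (hqsurj : Function.Surjective q)
    -- G is m-divisible
    (hdiv : ∀ g : G, ∃ g' : G, m • g' = g)
    -- N is torsion-free
    (htf : ∀ (n : ℤ) (x : N), n ≠ 0 → n • x = 0 → x = 0) :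
    ∀ s : S, m • s = 0 → ∃ j : J, m • j = 0 ∧ r j = s :=
  torsion_specialization_surjective_general m hm i₁ p₁ i₂ p₂ q r hex₁ hp₂ hex₂ hleft hright hqsurj
    hdiv htf
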